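/- Let G be a finite p-solvable group with O_{p'}(G) = 1. Then C_G(O_p(G)) ≤ O_p(G), i.e., the centralizer of the maximal normal p-subgroup is contained in it. -/

import Mathlib

open Subgroup

/-- The subgroup generated by the `n`-th powers of the elements of `H`
(for `n = p` this is the subgroup usually denoted `H^p`). -/
def pPow {G : Type*} [Group G] (n : ℕ) (H : Subgroup G) : Subgroup G :=
  Subgroup.closure ((fun x => x ^ n) '' (H : Set G))

/-- Iterated commutator subgroup `[N,_m P] = [N, P, P, ..., P]` with `P` repeated `m` times. -/
def itComm {G : Type*} [Group G] (N P : Subgroup G) : ℕ → Subgroup G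
  | 0 => N
  | (m + 1) => ⁅itComm N P m, P⁆

/-- Iterated commutator element `[v, g, g, ..., g]` (`g` repeated `m` times),
with the convention `[v, g] = v⁻¹ g⁻¹ v g`. -/
def itCommElem {G : Type*} [Group G] (v g : G) : ℕ → G
  | 0 => v
  | (m + 1) => (itCommElem v g m)⁻¹ * g⁻¹ * itCommElem v g m * g

theorem normal_biSup {G : Type*} [Group G] (S : Set (Subgroup G))
    (h : ∀ N ∈ S, N.Normal) : (⨆ N ∈ S, N).Normal := by
  constructor
  intro x hx g
  rw [iSup_subtype'] at hx ⊢
  refine Subgroup.iSup_induction (G := G) (fun N : S => (N : Subgroup G))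
    (C := fun y => g * y * g⁻¹ ∈ ⨆ N : S, (N : Subgroup G)) hx
    (fun N y hy => Subgroup.mem_iSup_of_mem N ((h N N.2).conj_mem y hy g))
    (by simpa using Subgroup.one_mem _) ?_
  intro a b ha hb
  have : g * (a * b) * g⁻¹ = (g * a * g⁻¹) * (g * b * g⁻¹) := by group
  rw [this]; exact Subgroup.mul_mem _ ha hb

/-- `O_p(G)`, the largest normal `p`-subgroup of `G`. -/
def Op (p : ℕ) (G : Type*) [Group G] : Subgroup G :=
  ⨆ N ∈ {N : Subgroup G | N.Normal ∧ IsPGroup p N}, N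

/-- `O_{p'}(G)`, the largest normal `p'`-subgroup of `G`. -/
def Op' (p : ℕ) (G : Type*) [Group G] : Subgroup G :=
  ⨆ N ∈ {N : Subgroup G | N.Normal ∧ (Nat.card N).Coprime p}, N

instance OpNormal (p : ℕ) (G : Type*) [Group G] : (Op p G).Normal :=
  normal_biSup _ (fun _ h => h.1)

instance Op'Normal (p : ℕ) (G : Type*) [Group G] : (Op' p G).Normal :=
  normal_biSup _ (fun _ h => h.1)

/-- `O_{p',p}(G)`: the preimage in `G` of `O_p(G / O_{p'}(G))`. -/
def Opp (p : ℕ) (G : Type*) [Group G] : Subgroup G :=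
  (Op p (G ⧸ Op' p G)).comap (QuotientGroup.mk' (Op' p G))

instance OppNormal (p : ℕ) (G : Type*) [Group G] : (Opp p G).Normal :=
  Subgroup.Normal.comap (OpNormal p _) _

/-- `G` is `p`-solvable: it admits a subnormal series each of whose factors is
a `p`-group or a `p'`-group (expressed via relative indices of consecutive terms). -/
def IsPSolvable (p : ℕ) (G : Type*) [Group G] : Prop :=
  ∃ (n : ℕ) (c : ℕ → Subgroup G), c 0 = ⊥ ∧ c n = ⊤ ∧
    ∀ i < n, c i ≤ c (i + 1) ∧
      (∀ g ∈ c (i + 1), ∀ x ∈ c i, g * x * g⁻¹ ∈ c i) ∧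
      ((∃ m, (c i).relIndex (c (i + 1)) = p ^ m) ∨ ((c i).relIndex (c (i + 1))).Coprime p)

universe u

/-- `pLengthLe p n G` means the `p`-length of `G` is at most `n`:
`p`-length `≤ 0` iff `G` is a `p'`-group, and
`p`-length of `G` `≤ n+1` iff the `p`-length of `G / O_{p',p}(G)` is `≤ n`. -/
def pLengthLe (p : ℕ) : ℕ → (G : Type u) → [inst : Group G] → Prop
  | 0, G, _ => (Nat.card G).Coprime p
  | (n + 1), G, _ => pLengthLe p n (G ⧸ Opp p G)

/-- `γ_i(P)`, the lower central series with the convention `γ_1(P) = P`. -/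
def gamma (P : Type*) [Group P] (i : ℕ) : Subgroup P :=
  (⊤ : Subgroup P).lowerCentralSeries (i - 1)

/-- `E_{k,r}(P) = ∏_{i + j(p-1) ≥ k, i ≥ r} γ_i(P)^{p^j}`. -/
def Ekr (p k r : ℕ) (P : Type*) [Group P] : Subgroup P :=
  ⨆ (i : ℕ) (j : ℕ) (_ : k ≤ i + j * (p - 1) ∧ r ≤ i), pPow (p ^ j) (gamma P i)

/-- A potent filtration of type `l` and length `k` of the `p`-group `P`:
a descending chain of normal subgroups `N 0 ⊇ N 1 ⊇ ... ⊇ N k = 1` with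
`[N i, P] ≤ N (i+1)` and `[N i,_l P] ≤ (N (i+1))^p` for all `i < k`. -/
def IsPotentFiltration (p l k : ℕ) {P : Type*} [Group P] (N : ℕ → Subgroup P) : Prop :=
  (∀ i, (N i).Normal) ∧ (∀ i j, i ≤ j → N j ≤ N i) ∧ N k = ⊥ ∧
  (∀ i < k, ⁅N i, (⊤ : Subgroup P)⁆ ≤ N (i + 1)) ∧
  (∀ i < k, itComm (N i) ⊤ l ≤ pPow p (N (i + 1)))

/-- `N` is PF-embedded of type `l` in the subgroup `P` of `G`: there is a potent
filtration of type `l` of `P` starting at `N`. -/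
def IsPFEmbedded (p l : ℕ) {G : Type*} [Group G] (N P : Subgroup G) : Prop :=
  ∃ (k : ℕ) (Nf : ℕ → Subgroup G), Nf 0 = N ∧ Nf k = ⊥ ∧
    (∀ i, Nf i ≤ P) ∧
    (∀ i, ∀ g ∈ P, ∀ x ∈ Nf i, g * x * g⁻¹ ∈ Nf i) ∧
    (∀ i, Nf (i + 1) ≤ Nf i) ∧
    (∀ i < k, ⁅Nf i, P⁆ ≤ Nf (i + 1)) ∧
    (∀ i < k, itComm (Nf i) P l ≤ pPow p (Nf (i + 1)))

/-!
The centralizer `C` of `Z = O_p(G)` is a normal, hence `p`-solvable, subgroup with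
`O_{p'}(C) = 1` whose own `O_p(C) ≤ Z` is central in `C`. So it suffices to show that a
`p`-solvable group `G` with `O_{p'}(G) = 1` and `Z = O_p(G)` central is a `p`-group.
Otherwise `G/Z` is a nontrivial `p`-solvable group with `O_p(G/Z) = 1`, so
`W = O_{p'}(G/Z) ≠ 1`. In the preimage `D` of `W` the central Sylow subgroup `Z` has a
Schur–Zassenhaus complement; it consists of the `|Z|`-th powers of `D`, so it is
characteristic in `D`, hence a nontrivial normal `p'`-subgroup of `G`: a contradiction.
-/

section LargestNormal

variable {p : ℕ} {G : Type*} [Group G]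

theorem le_Op {N : Subgroup G} [hN : N.Normal] (hNp : IsPGroup p N) : N ≤ Op p G :=
  le_biSup id (⟨hN, hNp⟩ : N ∈ {N : Subgroup G | N.Normal ∧ IsPGroup p N})

theorem le_Op' {N : Subgroup G} [hN : N.Normal] (hNp : (Nat.card N).Coprime p) : N ≤ Op' p G :=
  le_biSup id (⟨hN, hNp⟩ : N ∈ {N : Subgroup G | N.Normal ∧ (Nat.card N).Coprime p})

theorem card_sup_dvd_mul (H K : Subgroup G) [K.Normal] :
    Nat.card ↥(H ⊔ K) ∣ Nat.card H * Nat.card K := by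
  rw [← relIndex_bot_left, ← relIndex_mul_relIndex ⊥ K (H ⊔ K) bot_le le_sup_right,
    relIndex_sup_right, relIndex_bot_left, mul_comm (Nat.card H)]
  exact mul_dvd_mul_left _ (relIndex_dvd_card K H)

theorem supClosed_normal_isPGroup :
    SupClosed {N : Subgroup G | N.Normal ∧ IsPGroup p N} := by
  rintro H ⟨hHn, hH⟩ K ⟨hKn, hK⟩
  exact ⟨inferInstance, hH.to_sup_of_normal_right hK⟩

theorem supClosed_normal_coprime :
    SupClosed {N : Subgroup G | N.Normal ∧ (Nat.card N).Coprime p} := by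
  rintro H ⟨hHn, hH⟩ K ⟨hKn, hK⟩
  exact ⟨inferInstance, (hH.mul_left hK).coprime_dvd_left (card_sup_dvd_mul H K)⟩

theorem isPGroup_Op [Finite G] : IsPGroup p (Op p G) :=
  (supClosed_normal_isPGroup.biSup_mem (Set.toFinite _) ⟨inferInstance, .of_bot⟩
    fun _ hN => hN).2

theorem coprime_card_Op' [Finite G] : (Nat.card (Op' p G)).Coprime p :=
  (supClosed_normal_coprime.biSup_mem (Set.toFinite _)
    ⟨inferInstance, by rw [card_bot]; exact p.coprime_one_left⟩ fun _ hN => hN).2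

instance Op_characteristic : (Op p G).Characteristic := by
  refine characteristic_iff_map_le.mpr fun φ => map_le_iff_le_comap.mpr <|
    iSup₂_le fun N ⟨hNn, hN⟩ => map_le_iff_le_comap.mp ?_
  have := hNn.map φ.toMonoidHom φ.surjective
  exact le_Op (hN.map φ.toMonoidHom)

instance Op'_characteristic : (Op' p G).Characteristic := by
  refine characteristic_iff_map_le.mpr fun φ => map_le_iff_le_comap.mpr <|
    iSup₂_le fun N ⟨hNn, hN⟩ => map_le_iff_le_comap.mp ?_
  have := hNn.map φ.toMonoidHom φ.surjective
  exact le_Op' (by rwa [card_map_of_injective φ.injective])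

theorem map_subtype_Op_le [Finite G] (H : Subgroup G) [H.Normal] :
    (Op p H).map H.subtype ≤ Op p G :=
  le_Op (isPGroup_Op.map H.subtype)

theorem map_subtype_Op'_le [Finite G] (H : Subgroup G) [H.Normal] :
    (Op' p H).map H.subtype ≤ Op' p G :=
  le_Op' (by rw [card_map_of_injective H.subtype_injective]; exact coprime_card_Op')

end LargestNormal

section PSolvable

variable {p : ℕ} {G : Type*} [Group G]

theorem pow_or_coprime_of_dvd (hp : p.Prime) {a b : ℕ} (hab : a ∣ b)
    (hb : (∃ m, b = p ^ m) ∨ b.Coprime p) : (∃ m, a = p ^ m) ∨ a.Coprime p :=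
  hb.imp (fun ⟨_, hm⟩ => let ⟨j, _, hj⟩ := (Nat.dvd_prime_pow hp).mp (hm ▸ hab); ⟨j, hj⟩)
    fun hb => hb.coprime_dvd_left hab

theorem relIndex_subgroupOf_dvd_of_normal {H K : Subgroup G} (C : Subgroup G)
    [(H.subgroupOf K).Normal] : (H.subgroupOf C).relIndex (K.subgroupOf C) ∣ H.relIndex K := by
  have := relIndex_dvd_index_of_normal (H.subgroupOf K) (C.subgroupOf K)
  rw [← comap_subtype, relIndex_comap, subgroupOf_map_subtype] at this
  rwa [← comap_subtype, relIndex_comap, subgroupOf_map_subtype, inf_comm]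

theorem relIndex_map_dvd {G' : Type*} [Group G'] (f : G →* G') (H K : Subgroup G) :
    (H.map f).relIndex (K.map f) ∣ H.relIndex K := by
  rw [← relIndex_comap, comap_map_eq]
  exact relIndex_dvd_of_le_left K le_sup_left

theorem IsPSolvable.subgroup (hp : p.Prime) (h : IsPSolvable p G) (C : Subgroup G) :
    IsPSolvable p C := by
  obtain ⟨n, c, h0, hn, hstep⟩ := h
  refine ⟨n, fun i => (c i).subgroupOf C, by simp [h0], by simp [hn], fun i hi => ?_⟩
  obtain ⟨hle, hconj, hfac⟩ := hstep i hi
  have : ((c i).subgroupOf (c (i + 1))).Normal :=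
    (normal_subgroupOf_iff hle).mpr fun x g hx hg => hconj g hg x hx
  exact ⟨fun x hx => hle hx, fun g hg x hx => hconj g hg x hx,
    pow_or_coprime_of_dvd hp (relIndex_subgroupOf_dvd_of_normal C) hfac⟩

theorem IsPSolvable.of_surjective {G' : Type*} [Group G'] (hp : p.Prime) (h : IsPSolvable p G)
    (f : G →* G') (hf : Function.Surjective f) : IsPSolvable p G' := by
  obtain ⟨n, c, h0, hn, hstep⟩ := h
  refine ⟨n, fun i => (c i).map f, by simp [h0], by simp [hn, map_top_of_surjective f hf],
    fun i hi => ?_⟩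
  obtain ⟨hle, hconj, hfac⟩ := hstep i hi
  refine ⟨map_mono hle, ?_, pow_or_coprime_of_dvd hp (relIndex_map_dvd f _ _) hfac⟩
  rintro _ ⟨g, hg, rfl⟩ _ ⟨x, hx, rfl⟩
  exact ⟨g * x * g⁻¹, hconj g hg x hx, by simp⟩

theorem IsPSolvable.exists_normal_ne_top [Nontrivial G] (h : IsPSolvable p G) :
    ∃ H : Subgroup G, H.Normal ∧ H ≠ ⊤ ∧ ((∃ m, H.index = p ^ m) ∨ H.index.Coprime p) := by
  classical
  obtain ⟨n, c, h0, hn, hstep⟩ := h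
  have hex : ∃ k, c k = ⊤ := ⟨n, hn⟩
  obtain ⟨i, hi⟩ : ∃ i, Nat.find hex = i + 1 :=
    Nat.exists_eq_succ_of_ne_zero fun hk => bot_ne_top (h0 ▸ hk ▸ Nat.find_spec hex)
  have hin : i < n := by have := Nat.find_min' hex hn; omega
  have htop : c (i + 1) = ⊤ := hi ▸ Nat.find_spec hex
  obtain ⟨-, hconj, hfac⟩ := hstep i hin
  refine ⟨c i, ⟨fun x hx g => hconj g (htop ▸ mem_top g) x hx⟩, Nat.find_min hex (by omega), ?_⟩
  rwa [htop, relIndex_top_right] at hfac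

theorem IsPSolvable.Op_ne_bot_or_Op'_ne_bot (hp : p.Prime) [Finite G] [Nontrivial G]
    (h : IsPSolvable p G) : Op p G ≠ ⊥ ∨ Op' p G ≠ ⊥ := by
  induction hc : Nat.card G using Nat.strong_induction_on generalizing G with
  | _ n ih =>
    obtain ⟨H, hHn, hHtop, hH⟩ := h.exists_normal_ne_top
    rcases eq_or_ne H ⊥ with rfl | hHbot
    · rw [index_bot] at hH
      rcases hH with ⟨m, hm⟩ | hcop
      · exact .inl (ne_bot_of_le_ne_bot top_ne_bot (le_Op ((IsPGroup.of_card hm).to_subgroup ⊤)))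
      · exact .inr (ne_bot_of_le_ne_bot top_ne_bot (le_Op' (by rwa [card_top])))
    · have hlt : Nat.card H < n :=
        hc ▸ lt_of_le_of_ne (card_le_card_group H) (mt (card_eq_iff_eq_top H).mp hHtop)
      have : Nontrivial H := (nontrivial_iff_ne_bot H).mpr hHbot
      refine (ih _ hlt (h.subgroup hp H) rfl).imp (fun hO hbot => hO ?_) fun hO hbot => hO ?_
      · simpa [hbot, map_eq_bot_iff_of_injective _ H.subtype_injective] using
          map_subtype_Op_le (p := p) H
      · simpa [hbot, map_eq_bot_iff_of_injective _ H.subtype_injective] using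
          map_subtype_Op'_le (p := p) H

end PSolvable

section CentralComplement

variable {G : Type*} [Group G]

theorem exists_characteristic_card_eq_index_of_le_center {N : Subgroup G} (hN : N ≤ center G)
    (hcop : (Nat.card N).Coprime N.index) :
    ∃ Q : Subgroup G, Q.Characteristic ∧ Nat.card Q = N.index := by
  have : N.Normal :=
    ⟨fun n hn g => by rwa [mem_center_iff.mp (hN hn) g, mul_inv_cancel_right]⟩
  obtain ⟨Q, hQ⟩ := exists_right_complement'_of_coprime hcop
  have hcard : Nat.card Q = N.index := hQ.symm.index_eq_card.symm
  -- `x ↦ x ^ |N|` kills the central factor `N` and is a bijection of `Q`.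
  have hpow : (Q : Set G) = Set.range (· ^ Nat.card N) := by
    ext x
    constructor
    · intro hx
      have hQcop : (Nat.card Q).Coprime (Nat.card N) := hcard ▸ hcop.symm
      exact ⟨(powCoprime hQcop).symm ⟨x, hx⟩, congrArg Subtype.val
        ((powCoprime hQcop).apply_symm_apply ⟨x, hx⟩)⟩
    · rintro ⟨y, rfl⟩
      obtain ⟨⟨⟨a, ha⟩, ⟨b, hb⟩⟩, rfl⟩ := hQ.2 y
      have ha1 : a ^ Nat.card N = 1 := congrArg Subtype.val (pow_card_eq_one' (x := ⟨a, ha⟩))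
      show (a * b) ^ Nat.card N ∈ Q
      rw [Commute.mul_pow (mem_center_iff.mp (hN ha) b).symm, ha1, one_mul]
      exact pow_mem hb _
  refine ⟨Q, characteristic_iff_map_le.mpr fun φ => ?_, hcard⟩
  rintro _ ⟨x, hx, rfl⟩
  rw [hpow] at hx
  rw [← SetLike.mem_coe, hpow]
  obtain ⟨y, rfl⟩ := hx
  exact ⟨φ y, (map_pow φ y _).symm⟩

end CentralComplement

section HallHigman

variable {p : ℕ} {G : Type*} [Group G] [Finite G]

theorem Op_quotient_Op_eq_bot : Op p (G ⧸ Op p G) = ⊥ := by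
  have hK : IsPGroup p ((Op p (G ⧸ Op p G)).comap (QuotientGroup.mk' (Op p G))) :=
    isPGroup_Op.comap_of_ker_isPGroup _ (by rw [QuotientGroup.ker_mk']; exact isPGroup_Op)
  refine le_bot_iff.mp ((comap_le_comap_of_surjective (QuotientGroup.mk'_surjective _)).mp ?_)
  rw [MonoidHom.comap_bot, QuotientGroup.ker_mk']
  exact le_Op hK

theorem Op'_quotient_Op_eq_bot (hp : p.Prime) (h1 : Op' p G = ⊥) (hZ : Op p G ≤ center G) :
    Op' p (G ⧸ Op p G) = ⊥ := by
  have := Fact.mk hp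
  set Z := Op p G
  set W := Op' p (G ⧸ Z)
  set D := W.comap (QuotientGroup.mk' Z)
  have hindex : (Z.subgroupOf D).index = Nat.card W := by
    have := relIndex_ker (K := D) (QuotientGroup.mk' Z)
    rwa [QuotientGroup.ker_mk', map_comap_eq_self_of_surjective (QuotientGroup.mk'_surjective Z)]
      at this
  have hcop : (Nat.card (Z.subgroupOf D)).Coprime (Z.subgroupOf D).index := by
    have hZp : IsPGroup p (Z.subgroupOf D) := isPGroup_Op.comap_subtype
    obtain ⟨k, hk⟩ := IsPGroup.iff_card.mp hZp
    rw [hindex, hk]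
    exact (coprime_card_Op' (G := G ⧸ Z)).symm.pow_left k
  have hZc : Z.subgroupOf D ≤ center D := fun z hz =>
    mem_center_iff.mpr fun g => Subtype.ext (mem_center_iff.mp (hZ hz) g)
  obtain ⟨Q, hQchar, hQcard⟩ := exists_characteristic_card_eq_index_of_le_center hZc hcop
  have hQ : Q.map D.subtype ≤ Op' p G := le_Op' <| by
    rw [card_map_of_injective D.subtype_injective, hQcard, hindex]
    exact coprime_card_Op'
  rwa [h1, le_bot_iff, map_eq_bot_iff_of_injective _ D.subtype_injective, ← card_eq_one, hQcard,
    hindex, card_eq_one] at hQ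

theorem IsPSolvable.isPGroup_of_Op_le_center (hp : p.Prime) (h : IsPSolvable p G)
    (h1 : Op' p G = ⊥) (hZ : Op p G ≤ center G) : IsPGroup p G := by
  have hquot : Subsingleton (G ⧸ Op p G) := by
    by_contra hnt
    have := not_subsingleton_iff_nontrivial.mp hnt
    rcases (h.of_surjective hp _ (QuotientGroup.mk'_surjective (Op p G))).Op_ne_bot_or_Op'_ne_bot
      hp with hO | hO
    · exact hO Op_quotient_Op_eq_bot
    · exact hO (Op'_quotient_Op_eq_bot hp h1 hZ)
  have hOp := isPGroup_Op (p := p) (G := G)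
  rw [QuotientGroup.subgroup_eq_top_of_subsingleton _ hquot] at hOp
  exact hOp.of_equiv topEquiv

end HallHigman

/-- If `G` is a finite `p`-solvable group with `O_{p'}(G) = 1`,
then `C_G(O_p(G)) ≤ O_p(G)`. -/
theorem stmt_0 (p : ℕ) (hp : p.Prime) (G : Type*) [Group G] [Finite G]
    (hsolv : IsPSolvable p G) (h1 : Op' p G = ⊥) :
    Subgroup.centralizer ((Op p G : Subgroup G) : Set G) ≤ Op p G := by
  set C := centralizer (Op p G : Set G)
  have hC : Op' p C = ⊥ := by
    simpa [h1, map_eq_bot_iff_of_injective _ C.subtype_injective] using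
      map_subtype_Op'_le (p := p) C
  have hCZ : Op p C ≤ center C := fun z hz => mem_center_iff.mpr fun c =>
    Subtype.ext (c.2 z (map_subtype_Op_le C ⟨z, hz, rfl⟩)).symm
  exact le_Op ((hsolv.subgroup hp C).isPGroup_of_Op_le_center hp hC hCZ)
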